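/- Let K be a finite extension of ℚ_p and let N/K be a fully ramified cyclic extension of degree p with unique ramification break b satisfying p ∤ b. Then every ρ ∈ N with v_N(ρ) ≡ b (mod p) generates a normal basis of N over K. -/

import Mathlib

/-!
Let `π` be a uniformizer and `σ ≠ 1` in `Gal(N/K)`; then `v(σπ - π) = b + 1`, and a norm
computation forces `b > 0`. Writing `x = ∑ cₖ πᵏ` (`0 ≤ k < p`, the valuations `p v(cₖ) + k` being
pairwise distinct), the binomial theorem shows that `σ - 1` raises the valuation of every `x` with
`p ∤ v(x)` by exactly `b`. Hence the iterates `(σ - 1)ʲ ρ`, `0 ≤ j < p`, have valuations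
`v(ρ) + j b`, which are pairwise distinct mod `p` because `v(ρ) ≡ b` and `p ∤ b`. Elements with
valuations distinct mod `p = e(N/K)` are `K`-linearly independent, so these iterates form a basis
of `N`; they lie in the `K`-span of the conjugates of `ρ`, which is therefore all of `N`.
-/

/-- An additive, normalized discrete valuation on a field `F`, recorded as a function
`v : F → ℤ` (the value at `0` is irrelevant): `v` is additive on products of nonzero
elements, satisfies the ultrametric inequality on nonzero elements, and is surjective
onto `ℤ` (this is the normalization `v(π) = 1` for a uniformizer `π`). -/
structure IsNormDiscreteVal {F : Type*} [Field F] (v : F → ℤ) : Prop where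
  map_mul : ∀ ⦃x y : F⦄, x ≠ 0 → y ≠ 0 → v (x * y) = v x + v y
  min_le_add : ∀ ⦃x y : F⦄, x ≠ 0 → y ≠ 0 → x + y ≠ 0 → min (v x) (v y) ≤ v (x + y)
  surj : ∀ k : ℤ, ∃ x : F, x ≠ 0 ∧ v x = k

/-- The `i`-th ramification group (lower numbering) of `N/K`, as a set of `K`-algebra
automorphisms of `N`:  `G_i = {σ : v_N(σ π_N − π_N) ≥ i + 1}`, where `π_N` is a
uniformizer of `N`; the case `σ π_N = π_N` corresponds to the convention `v_N(0) = ∞`. -/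
def ramSet (K N : Type*) [Field K] [Field N] [Algebra K N]
    (vN : N → ℤ) (πN : N) (i : ℤ) : Set (N ≃ₐ[K] N) :=
  {σ | σ πN = πN ∨ i + 1 ≤ vN (σ πN - πN)}

/-- `ρ` generates a normal basis of `N` over `K`: the conjugates `σ ρ` for
`σ ∈ Gal(N/K)` form a `K`-vector space basis of `N`. -/
def IsNormalBasisGenerator (K N : Type*) [Field K] [Field N] [Algebra K N] (ρ : N) : Prop :=
  ∃ b : Module.Basis (N ≃ₐ[K] N) K N, ∀ σ : N ≃ₐ[K] N, b σ = σ ρ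

lemma Finset.exists_forall_lt_of_injOn {ι α : Type*} [LinearOrder α] {s : Finset ι}
    (hs : s.Nonempty) {f : ι → α} (hf : Set.InjOn f s) :
    ∃ i ∈ s, ∀ j ∈ s, j ≠ i → f i < f j := by
  obtain ⟨i, hi, hmin⟩ := s.exists_min_image f hs
  exact ⟨i, hi, fun j hj hji => (hmin j hj).lt_of_ne fun h => hji (hf hi hj h).symm⟩

lemma Int.eq_zero_of_forall_prime_ne_dvd {p : ℕ} {m : ℤ}
    (h : ∀ q : ℕ, q.Prime → q ≠ p → (q : ℤ) ∣ m) : m = 0 := by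
  obtain ⟨q, hq, hqp⟩ := Nat.exists_infinite_primes (max p m.natAbs + 1)
  refine Int.eq_zero_of_abs_lt_dvd (h q hqp (by omega)) ?_
  rw [Int.abs_eq_natAbs]
  omega

lemma Fin.eq_of_natCast_modEq {p : ℕ} {k k' : Fin p} (h : (k : ℤ) ≡ (k' : ℤ) [ZMOD p]) :
    k = k' :=
  Fin.ext <| (Int.natCast_modEq_iff.mp h).eq_of_lt_of_lt k.2 k'.2

lemma Fin.eq_of_add_mul_modEq {p : ℕ} (hp : p.Prime) {a b : ℤ} (hpb : ¬ (p : ℤ) ∣ b)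
    {k k' : Fin p} (h : a + k * b ≡ a + k' * b [ZMOD p]) : k = k' := by
  refine Fin.eq_of_natCast_modEq (Int.modEq_iff_dvd.mpr ?_)
  have h' := Int.modEq_iff_dvd.mp (Int.ModEq.add_left_cancel' a h)
  rw [← sub_mul] at h'
  exact ((Nat.prime_iff_prime_int.mp hp).dvd_or_dvd h').resolve_right hpb

open Polynomial in
lemma PadicInt.exists_pow_eq_of_norm_sub_one_lt_one {p : ℕ} [Fact p.Prime] {q : ℕ}
    (hq : p.Coprime q) {u : ℤ_[p]} (hu : ‖u - 1‖ < 1) : ∃ z : ℤ_[p], z ^ q = u := by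
  have hder : aeval (1 : ℤ_[p]) (derivative (X ^ q - C u)) = q := by simp [derivative_X_pow]
  obtain ⟨z, hz, -⟩ := hensels_lemma (F := X ^ q - C u) (a := 1) (by
    rw [hder, PadicInt.norm_natCast_eq_one_iff.mpr hq, one_pow]
    simpa [norm_sub_rev] using hu)
  exact ⟨z, by simpa [sub_eq_zero] using hz⟩

lemma PadicInt.norm_natCast_pow_sub_one_lt_one {p : ℕ} [Fact p.Prime] {n : ℕ}
    (hn : p.Coprime n) : ‖(n : ℤ_[p]) ^ (p - 1) - 1‖ < 1 := by
  have hp := (Fact.out : p.Prime)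
  have h := Int.ModEq.pow_card_sub_one_eq_one hp (n := n)
    ((Nat.isCoprime_iff_coprime.mpr hn.symm))
  have := (PadicInt.norm_int_lt_one_iff_dvd (p := p) ((n : ℤ) ^ (p - 1) - 1)).mpr
    (Int.ModEq.dvd h.symm)
  simpa using this

namespace IsNormDiscreteVal

variable {F : Type*} [Field F] {v : F → ℤ}

lemma val_one (hv : IsNormDiscreteVal v) : v 1 = 0 := by
  have h := hv.map_mul (one_ne_zero (α := F)) one_ne_zero
  rw [one_mul] at h
  omega

lemma val_inv (hv : IsNormDiscreteVal v) {x : F} (hx : x ≠ 0) : v x⁻¹ = -v x := by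
  have h := hv.map_mul hx (inv_ne_zero hx)
  rw [mul_inv_cancel₀ hx, hv.val_one] at h
  omega

lemma val_neg (hv : IsNormDiscreteVal v) {x : F} (hx : x ≠ 0) : v (-x) = v x := by
  have h1 : (-1 : F) ≠ 0 := neg_ne_zero.mpr one_ne_zero
  have h := hv.map_mul h1 h1
  rw [neg_one_mul, neg_neg, hv.val_one] at h
  rw [← neg_one_mul, hv.map_mul h1 hx]
  omega

lemma val_pow (hv : IsNormDiscreteVal v) {x : F} (hx : x ≠ 0) (n : ℕ) :
    v (x ^ n) = n * v x := by
  induction n with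
  | zero => simpa using hv.val_one
  | succ n ih =>
    rw [pow_succ, hv.map_mul (pow_ne_zero _ hx) hx, ih]
    push_cast
    ring

lemma val_add_of_lt (hv : IsNormDiscreteVal v) {x y : F} (hx : x ≠ 0) (hy : y ≠ 0)
    (hlt : v x < v y) : x + y ≠ 0 ∧ v (x + y) = v x := by
  have hxy : x + y ≠ 0 := by
    intro h
    rw [eq_neg_of_add_eq_zero_left h, hv.val_neg hy] at hlt
    exact hlt.false
  refine ⟨hxy, le_antisymm ?_ (min_eq_left hlt.le ▸ hv.min_le_add hx hy hxy)⟩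
  -- `x = (x + y) + (-y)`, so `v x ≥ min (v (x + y)) (v y)`, and the minimum cannot be `v y`
  have h := hv.min_le_add hxy (neg_ne_zero.mpr hy) (by rwa [add_neg_cancel_right])
  rw [add_neg_cancel_right, hv.val_neg hy] at h
  omega

lemma lt_val_sum (hv : IsNormDiscreteVal v) {ι : Type*} (s : Finset ι) {g : ι → F}
    {m : ℤ} (hg : ∀ i ∈ s, g i ≠ 0 → m < v (g i)) :
    ∑ i ∈ s, g i ≠ 0 → m < v (∑ i ∈ s, g i) := by
  classical
  induction s using Finset.induction_on with
  | empty => simp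
  | insert a s ha ih =>
    have ha' := hg a (Finset.mem_insert_self a s)
    have ih' := ih fun i hi => hg i (Finset.mem_insert_of_mem hi)
    rw [Finset.sum_insert ha]
    intro hsum
    by_cases hga : g a = 0
    · rw [hga, zero_add] at hsum ⊢; exact ih' hsum
    by_cases hs : ∑ i ∈ s, g i = 0
    · rw [hs, add_zero]; exact ha' hga
    have := hv.min_le_add hga hs hsum
    have := ih' hs
    have := ha' hga
    omega

lemma val_sum_of_forall_lt (hv : IsNormDiscreteVal v) {ι : Type*} {s : Finset ι} {g : ι → F}
    {i₀ : ι} (hi₀ : i₀ ∈ s) (hg₀ : g i₀ ≠ 0)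
    (hlt : ∀ i ∈ s, i ≠ i₀ → g i ≠ 0 → v (g i₀) < v (g i)) :
    ∑ i ∈ s, g i ≠ 0 ∧ v (∑ i ∈ s, g i) = v (g i₀) := by
  classical
  rw [← Finset.add_sum_erase s g hi₀]
  by_cases h : ∑ i ∈ s.erase i₀, g i = 0
  · rw [h, add_zero]; exact ⟨hg₀, rfl⟩
  exact hv.val_add_of_lt hg₀ h <| hv.lt_val_sum (s.erase i₀)
    (fun i hi => hlt i (Finset.mem_of_mem_erase hi) (Finset.ne_of_mem_erase hi)) h

lemma val_prod (hv : IsNormDiscreteVal v) {ι : Type*} (s : Finset ι) {g : ι → F}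
    (hg : ∀ i ∈ s, g i ≠ 0) : v (∏ i ∈ s, g i) = ∑ i ∈ s, v (g i) := by
  classical
  induction s using Finset.induction_on with
  | empty => simpa using hv.val_one
  | insert a s ha ih =>
    have hs := fun i hi => hg i (Finset.mem_insert_of_mem hi)
    rw [Finset.prod_insert ha, Finset.sum_insert ha,
      hv.map_mul (hg a (Finset.mem_insert_self a s)) (Finset.prod_ne_zero_iff.mpr hs), ih hs]

/-- `n ^ (p - 1)` is a `q`-th power in `ℤ_[p]` for every prime `q ≠ p` by Hensel's lemma, so
`(p - 1) v(n)` is divisible by every such `q`. -/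
lemma val_natCast_eq_zero (hv : IsNormDiscreteVal v) {p : ℕ} [Fact p.Prime] [Algebra ℚ_[p] F]
    {n : ℕ} (hn : p.Coprime n) : v n = 0 := by
  have hp := (Fact.out : p.Prime)
  let ψ : ℤ_[p] →+* F := (algebraMap ℚ_[p] F).comp PadicInt.Coe.ringHom
  have hn0 : (n : F) ≠ 0 := by
    rw [← map_natCast (algebraMap ℚ_[p] F), map_ne_zero, Nat.cast_ne_zero]
    rintro rfl
    exact hp.one_lt.ne' (Nat.coprime_zero_right p |>.mp hn)
  have hdvd : ∀ q : ℕ, q.Prime → q ≠ p → (q : ℤ) ∣ (p - 1 : ℕ) * v n := by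
    intro q hq hqp
    obtain ⟨z, hz⟩ := PadicInt.exists_pow_eq_of_norm_sub_one_lt_one
      ((Nat.coprime_primes hp hq).mpr hqp.symm) (PadicInt.norm_natCast_pow_sub_one_lt_one hn)
    have hψz : ψ z ^ q = (n : F) ^ (p - 1) := by rw [← map_pow, hz, map_pow, map_natCast]
    have hz0 : ψ z ≠ 0 := fun h => pow_ne_zero (p - 1) hn0 (by rw [← hψz, h, zero_pow hq.ne_zero])
    exact ⟨v (ψ z), by rw [← hv.val_pow hn0, ← hψz, hv.val_pow hz0]⟩
  have hp1 : ((p - 1 : ℕ) : ℤ) ≠ 0 := by have := hp.two_le; omega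
  exact (mul_eq_zero.mp (Int.eq_zero_of_forall_prime_ne_dvd hdvd)).resolve_left hp1

lemma val_one_add_pow_sub_one (hv : IsNormDiscreteVal v) {p : ℕ} [Fact p.Prime]
    [Algebra ℚ_[p] F] {δ : F} (hδ : δ ≠ 0) (hvδ : 0 < v δ) {k : ℕ} (hk : 1 ≤ k) (hkp : k < p) :
    (1 + δ) ^ k - 1 ≠ 0 ∧ v ((1 + δ) ^ k - 1) = v δ := by
  have hp := (Fact.out : p.Prime)
  have := charZero_of_injective_algebraMap (algebraMap ℚ_[p] F).injective
  have hexp : (1 + δ) ^ k - 1 = ∑ i ∈ Finset.range k, δ ^ (i + 1) * (k.choose (i + 1) : F) := by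
    rw [add_comm, add_pow, Finset.sum_range_succ']
    simp
  have hterm : ∀ i ∈ Finset.range k, δ ^ (i + 1) * (k.choose (i + 1) : F) ≠ 0 ∧
      v (δ ^ (i + 1) * (k.choose (i + 1) : F)) = (i + 1) * v δ := by
    intro i hi
    have hik : i + 1 ≤ k := Finset.mem_range.mp hi
    have hcop : p.Coprime (k.choose (i + 1)) := by
      refine (hp.coprime_iff_not_dvd).mpr fun hdvd => ?_
      have := (hp.dvd_factorial (n := k)).mp <| hdvd.trans <|
        Nat.choose_mul_factorial_mul_factorial hik ▸ dvd_mul_of_dvd_left (dvd_mul_right _ _) _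
      omega
    have hc0 : (k.choose (i + 1) : F) ≠ 0 := Nat.cast_ne_zero.mpr (Nat.choose_pos hik).ne'
    refine ⟨mul_ne_zero (pow_ne_zero _ hδ) hc0, ?_⟩
    rw [hv.map_mul (pow_ne_zero _ hδ) hc0, hv.val_pow hδ, hv.val_natCast_eq_zero hcop]
    push_cast
    ring
  have h0 : 0 ∈ Finset.range k := Finset.mem_range.mpr hk
  obtain ⟨hne, hval⟩ := hv.val_sum_of_forall_lt
      (g := fun i => δ ^ (i + 1) * (k.choose (i + 1) : F)) h0 (hterm 0 h0).1
      fun i hi hi0 _ => by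
        rw [(hterm 0 h0).2, (hterm i hi).2, Nat.cast_zero, zero_add, one_mul]
        have : 1 ≤ (i : ℤ) := by omega
        nlinarith
  rw [hexp, hval, (hterm 0 h0).2]
  exact ⟨hne, by simp⟩

lemma val_pow_sub_pow (hv : IsNormDiscreteVal v) {p : ℕ} [Fact p.Prime] [Algebra ℚ_[p] F]
    {x y : F} (hx : x ≠ 0) (hxy : y - x ≠ 0) (hlt : v x < v (y - x)) {k : ℕ} (hk : 1 ≤ k)
    (hkp : k < p) : y ^ k - x ^ k ≠ 0 ∧ v (y ^ k - x ^ k) = v (y - x) + (k - 1) * v x := by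
  set δ := (y - x) * x⁻¹
  have hδ : δ ≠ 0 := mul_ne_zero hxy (inv_ne_zero hx)
  have hvδ : v δ = v (y - x) - v x := by rw [hv.map_mul hxy (inv_ne_zero hx), hv.val_inv hx]; ring
  obtain ⟨hne, hval⟩ := hv.val_one_add_pow_sub_one hδ (by omega) hk hkp
  have hfac : y ^ k - x ^ k = x ^ k * ((1 + δ) ^ k - 1) := by
    rw [mul_sub, mul_one, ← mul_pow]
    congr 2
    rw [mul_add, mul_one, mul_comm, inv_mul_cancel_right₀ hx, add_sub_cancel]
  rw [hfac, hv.map_mul (pow_ne_zero _ hx) hne, hv.val_pow hx, hval, hvδ]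
  exact ⟨mul_ne_zero (pow_ne_zero _ hx) hne, by ring⟩

end IsNormDiscreteVal

lemma val_iterate_of_val_apply {F : Type*} [Zero F] {v : F → ℤ} {f : F → F} {p : ℕ} (hp : p.Prime)
    {b : ℤ} (hpb : ¬ (p : ℤ) ∣ b) (hf : ∀ x, x ≠ 0 → ¬ (p : ℤ) ∣ v x → f x ≠ 0 ∧ v (f x) = v x + b)
    {ρ : F} (hρ0 : ρ ≠ 0) (hρ : v ρ ≡ b [ZMOD p]) :
    ∀ j < p, f^[j] ρ ≠ 0 ∧ v (f^[j] ρ) = v ρ + j * b := by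
  intro j
  induction j with
  | zero => intro; simpa using hρ0
  | succ j ih =>
    intro hj
    obtain ⟨hne, hval⟩ := ih (by omega)
    have hnd : ¬ (p : ℤ) ∣ v (f^[j] ρ) := fun hdvd => by
      have h : (p : ℤ) ∣ ((j + 1 : ℕ) : ℤ) * b := by
        have := dvd_add hdvd hρ.dvd
        rwa [hval, show v ρ + j * b + (b - v ρ) = ((j + 1 : ℕ) : ℤ) * b by push_cast; ring] at this
      rcases (Nat.prime_iff_prime_int.mp hp).dvd_or_dvd h with h | h
      · exact Nat.not_dvd_of_pos_of_lt (by omega) hj (Int.natCast_dvd_natCast.mp h)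
      · exact hpb h
    rw [Function.iterate_succ_apply']
    refine ⟨(hf _ hne hnd).1, ?_⟩
    rw [(hf _ hne hnd).2, hval]
    push_cast
    ring

section Extension

variable {K N : Type*} [Field K] [Field N] [Algebra K N] {p : ℕ} {vK : K → ℤ} {vN : N → ℤ}

lemma val_smul (hvN : IsNormDiscreteVal vN)
    (hfull : ∀ x : K, x ≠ 0 → vN (algebraMap K N x) = p * vK x) {c : K} (hc : c ≠ 0)
    {y : N} (hy : y ≠ 0) : c • y ≠ 0 ∧ vN (c • y) = p * vK c + vN y := by
  rw [Algebra.smul_def]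
  have hc' : algebraMap K N c ≠ 0 := (map_ne_zero _).mpr hc
  exact ⟨mul_ne_zero hc' hy, by rw [hvN.map_mul hc' hy, hfull c hc]⟩

lemma exists_val_smul_lt {ι : Type*} [Fintype ι]
    (hvN : IsNormDiscreteVal vN) (hfull : ∀ x : K, x ≠ 0 → vN (algebraMap K N x) = p * vK x)
    {y : ι → N} (hy0 : ∀ i, y i ≠ 0) (hy : ∀ i j, vN (y i) ≡ vN (y j) [ZMOD p] → i = j)
    {c : ι → K} (hc : c ≠ 0) :
    ∃ i₀, c i₀ ≠ 0 ∧ ∀ i, i ≠ i₀ → c i ≠ 0 → vN (c i₀ • y i₀) < vN (c i • y i) := by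
  classical
  obtain ⟨j, hj⟩ := Function.ne_iff.mp hc
  set t := Finset.univ.filter fun i => c i ≠ 0
  have hval : ∀ i ∈ t, vN (c i • y i) = p * vK (c i) + vN (y i) :=
    fun i hi => (val_smul hvN hfull (Finset.mem_filter.mp hi).2 (hy0 i)).2
  have hinj : Set.InjOn (fun i => vN (c i • y i)) t := fun i hi i' hi' h => by
    refine hy i i' (Int.modEq_iff_dvd.mpr ⟨vK (c i) - vK (c i'), ?_⟩)
    simp only [hval i hi, hval i' hi'] at h
    linarith
  obtain ⟨i₀, hi₀, hmin⟩ := Finset.exists_forall_lt_of_injOn ⟨j, by simpa [t] using hj⟩ hinj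
  exact ⟨i₀, (Finset.mem_filter.mp hi₀).2, fun i hi hci => hmin i (by simpa [t] using hci) hi⟩

lemma linearIndependent_of_val_modEq_imp_eq {ι : Type*} [Fintype ι]
    (hvN : IsNormDiscreteVal vN) (hfull : ∀ x : K, x ≠ 0 → vN (algebraMap K N x) = p * vK x)
    {y : ι → N} (hy0 : ∀ i, y i ≠ 0) (hy : ∀ i j, vN (y i) ≡ vN (y j) [ZMOD p] → i = j) :
    LinearIndependent K y := by
  rw [Fintype.linearIndependent_iff]
  by_contra! ⟨c, hsum, hc⟩
  obtain ⟨i₀, hc₀, hmin⟩ := exists_val_smul_lt hvN hfull hy0 hy (Function.ne_iff.mpr hc)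
  exact (hvN.val_sum_of_forall_lt (Finset.mem_univ i₀) (smul_ne_zero hc₀ (hy0 i₀))
    fun i _ hi h => hmin i hi (left_ne_zero_of_smul h)).1 hsum

lemma span_range_pow_eq_top [FiniteDimensional K N] (hvN : IsNormDiscreteVal vN)
    (hfull : ∀ x : K, x ≠ 0 → vN (algebraMap K N x) = p * vK x) (hdeg : Module.finrank K N = p)
    {π : N} (hπ0 : π ≠ 0) (hπ : vN π = 1) :
    Submodule.span K (Set.range fun k : Fin p => π ^ (k : ℕ)) = ⊤ := by
  refine LinearIndependent.span_eq_top_of_card_eq_finrank' ?_ (by rw [Fintype.card_fin, hdeg])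
  refine linearIndependent_of_val_modEq_imp_eq hvN hfull (fun k => pow_ne_zero _ hπ0)
    fun k k' h => Fin.eq_of_natCast_modEq ?_
  simpa [hvN.val_pow hπ0, hπ] using h

lemma AlgEquiv.eq_one_of_apply_eq_of_span_range_pow {n : ℕ} {π : N}
    (hspan : Submodule.span K (Set.range fun k : Fin n => π ^ (k : ℕ)) = ⊤) {τ : N ≃ₐ[K] N}
    (hτ : τ π = π) : τ = 1 := by
  have h := LinearMap.ext_on_range hspan (f := τ.toLinearMap) (g := LinearMap.id)
    fun k => by simp [hτ]
  exact AlgEquiv.ext fun x => LinearMap.congr_fun h x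

lemma exists_apply_ne_of_ramSet_ssubset_iff {πN : N} {b : ℤ}
    (hb : ∀ i : ℤ, ramSet K N vN πN (i + 1) ⊂ ramSet K N vN πN i ↔ i = b) :
    ∃ τ : N ≃ₐ[K] N, τ πN ≠ πN := by
  obtain ⟨τ, -, hτ⟩ := Set.exists_of_ssubset ((hb b).mpr rfl)
  exact ⟨τ, fun h => hτ (Or.inl h)⟩

lemma val_sub_eq_of_ramSet_ssubset_iff {πN : N} {b : ℤ}
    (hb : ∀ i : ℤ, ramSet K N vN πN (i + 1) ⊂ ramSet K N vN πN i ↔ i = b)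
    {τ : N ≃ₐ[K] N} (hτ : τ πN ≠ πN) : vN (τ πN - πN) = b + 1 := by
  set m := vN (τ πN - πN)
  have hss : ramSet K N vN πN (m - 1 + 1) ⊂ ramSet K N vN πN (m - 1) :=
    ⟨fun σ hσ => hσ.imp_right fun h => by omega,
      fun h => (h (Or.inr (by omega) : τ ∈ ramSet K N vN πN (m - 1))).elim hτ fun h => by omega⟩
  have := (hb _).mp hss
  omega

/-- The norm of `π` has valuation divisible by `p`; were `b + 1 ≤ 0`, it would be
`1 + (p - 1) (b + 1) ≡ -b (mod p)`, since then `v (τ π) = b + 1` for every `τ ≠ 1`. -/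
lemma break_pos [FiniteDimensional K N] [IsGalois K N] (hvN : IsNormDiscreteVal vN)
    (hfull : ∀ x : K, x ≠ 0 → vN (algebraMap K N x) = p * vK x) (hdeg : Module.finrank K N = p)
    {π : N} (hπ0 : π ≠ 0) (hπ : vN π = 1) {b : ℤ}
    (hbreak : ∀ τ : N ≃ₐ[K] N, τ π ≠ π → vN (τ π - π) = b + 1) (hpb : ¬ (p : ℤ) ∣ b) :
    0 < b := by
  classical
  by_contra! hb
  have hb0 : b ≠ 0 := by rintro rfl; exact hpb (dvd_zero _)
  have hspan := span_range_pow_eq_top hvN hfull hdeg hπ0 hπ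
  have hconj : ∀ τ : N ≃ₐ[K] N, τ ≠ 1 → vN (τ π) = b + 1 := fun τ hτ => by
    have hτπ : τ π ≠ π := mt (AlgEquiv.eq_one_of_apply_eq_of_span_range_pow hspan) hτ
    have h := (hvN.val_add_of_lt (sub_ne_zero.mpr hτπ) hπ0 (by rw [hbreak τ hτπ, hπ]; omega)).2
    rwa [sub_add_cancel, hbreak τ hτπ] at h
  have hcard : (Finset.univ : Finset (N ≃ₐ[K] N)).card = p := by
    rw [Finset.card_univ, ← Nat.card_eq_fintype_card, IsGalois.card_aut_eq_finrank, hdeg]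
  have hp1 : 1 ≤ p := hdeg ▸ Module.finrank_pos
  have hnorm : vN (algebraMap K N (Algebra.norm K π)) = 1 + (p - 1) * (b + 1) := by
    rw [Algebra.norm_eq_prod_automorphisms, hvN.val_prod _ fun τ _ => by simpa using hπ0,
      ← Finset.add_sum_erase _ _ (Finset.mem_univ 1),
      Finset.sum_congr rfl fun τ hτ => hconj τ (Finset.ne_of_mem_erase hτ), Finset.sum_const,
      Finset.card_erase_of_mem (Finset.mem_univ 1), hcard, AlgEquiv.one_apply, hπ, nsmul_eq_mul,
      Nat.cast_sub hp1, Nat.cast_one]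
  rw [hfull _ (Algebra.norm_ne_zero_iff.mpr hπ0)] at hnorm
  exact hpb ⟨b + 1 - vK (Algebra.norm K π), by linarith⟩

/-- Write `x = ∑ cₖ πᵏ`. In `σ x - x = ∑ cₖ (σ πᵏ - πᵏ)` the term with `k = 0` vanishes and every
other term has valuation exactly `b` more than the corresponding term of `x`; as `p ∤ v x`, the
dominant term of `x` has `k ≠ 0`, so it stays dominant. -/
lemma val_apply_sub_self [Fact p.Prime] [Algebra ℚ_[p] N] (hvN : IsNormDiscreteVal vN)
    (hfull : ∀ x : K, x ≠ 0 → vN (algebraMap K N x) = p * vK x) {π : N}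
    (hspan : Submodule.span K (Set.range fun k : Fin p => π ^ (k : ℕ)) = ⊤) (hπ0 : π ≠ 0)
    (hπ : vN π = 1) {σ : N ≃ₐ[K] N} {b : ℤ} (hb : 0 < b) (hσ : σ π ≠ π)
    (hσb : vN (σ π - π) = b + 1) {x : N} (hx : x ≠ 0) (hpx : ¬ (p : ℤ) ∣ vN x) :
    σ x - x ≠ 0 ∧ vN (σ x - x) = vN x + b := by
  obtain ⟨c, rfl⟩ := (Submodule.mem_span_range_iff_exists_fun K).mp
    (hspan ▸ Submodule.mem_top (x := x))
  have hpow : ∀ k : Fin p, c k ≠ 0 → vN (c k • π ^ (k : ℕ)) = p * vK (c k) + k := fun k hk => by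
    rw [(val_smul hvN hfull hk (pow_ne_zero _ hπ0)).2, hvN.val_pow hπ0, hπ, mul_one]
  have hpow' : ∀ k : Fin p, c k ≠ 0 → (k : ℕ) ≠ 0 →
      c k • (σ (π ^ (k : ℕ)) - π ^ (k : ℕ)) ≠ 0 ∧
        vN (c k • (σ (π ^ (k : ℕ)) - π ^ (k : ℕ))) = vN (c k • π ^ (k : ℕ)) + b := by
    intro k hk hk0
    obtain ⟨hne, hval⟩ := hvN.val_pow_sub_pow hπ0 (sub_ne_zero.mpr hσ) (by omega)
      (Nat.one_le_iff_ne_zero.mpr hk0) k.2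
    rw [map_pow]
    obtain ⟨hne', hval'⟩ := val_smul hvN hfull hk hne
    refine ⟨hne', ?_⟩
    rw [hval', hval, hσb, hπ, hpow k hk]
    ring
  obtain ⟨k₀, hc₀, hmin⟩ := exists_val_smul_lt hvN hfull (fun k => pow_ne_zero _ hπ0)
    (fun k k' h => Fin.eq_of_natCast_modEq (by simpa [hvN.val_pow hπ0, hπ] using h))
    (c := c) (by rintro rfl; simp at hx)
  have hxval := (hvN.val_sum_of_forall_lt (Finset.mem_univ k₀)
    (smul_ne_zero hc₀ (pow_ne_zero _ hπ0)) fun k _ hk h => hmin k hk (left_ne_zero_of_smul h)).2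
  have hk₀ : (k₀ : ℕ) ≠ 0 := fun h => hpx ⟨vK (c k₀), by rw [hxval, hpow k₀ hc₀, h]; ring⟩
  have hsub : σ (∑ k, c k • π ^ (k : ℕ)) - ∑ k, c k • π ^ (k : ℕ) =
      ∑ k, c k • (σ (π ^ (k : ℕ)) - π ^ (k : ℕ)) := by
    simp only [map_sum, map_smul, smul_sub, Finset.sum_sub_distrib]
  rw [hsub, hxval, ← (hpow' k₀ hc₀ hk₀).2]
  refine hvN.val_sum_of_forall_lt (Finset.mem_univ k₀) (hpow' k₀ hc₀ hk₀).1 fun k _ hk h => ?_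
  have hck := left_ne_zero_of_smul h
  have hk0 : (k : ℕ) ≠ 0 := fun h0 => h (by simp [h0])
  rw [(hpow' k₀ hc₀ hk₀).2, (hpow' k hck hk0).2]
  linarith [hmin k hk hck]

end Extension

lemma AlgEquiv.iterate_sub_mem_span_range_apply {K N : Type*} [Field K] [Field N] [Algebra K N]
    (σ : N ≃ₐ[K] N) (ρ : N) (j : ℕ) :
    (fun y => σ y - y)^[j] ρ ∈ Submodule.span K (Set.range fun τ : N ≃ₐ[K] N => τ ρ) := by
  set W := Submodule.span K (Set.range fun τ : N ≃ₐ[K] N => τ ρ)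
  have hσW : ∀ y ∈ W, σ y ∈ W := fun y hy => by
    have h := Submodule.mem_map_of_mem (f := σ.toLinearMap) hy
    rw [Submodule.map_span] at h
    refine Submodule.span_mono ?_ h
    rintro _ ⟨_, ⟨τ, rfl⟩, rfl⟩
    exact ⟨σ * τ, rfl⟩
  induction j with
  | zero => exact Submodule.subset_span ⟨1, rfl⟩
  | succ j ih =>
    rw [Function.iterate_succ_apply']
    exact sub_mem (hσW _ ih) ih

lemma isNormalBasisGenerator_of_top_le_span {K N : Type*} [Field K] [Field N] [Algebra K N]
    [FiniteDimensional K N] [IsGalois K N] {ρ : N}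
    (h : ⊤ ≤ Submodule.span K (Set.range fun τ : N ≃ₐ[K] N => τ ρ)) :
    IsNormalBasisGenerator K N ρ := by
  have hcard : Fintype.card (N ≃ₐ[K] N) = Module.finrank K N := by
    rw [← Nat.card_eq_fintype_card, IsGalois.card_aut_eq_finrank]
  exact ⟨basisOfTopLeSpanOfCardEqFinrank _ h hcard,
    fun τ => congrFun (coe_basisOfTopLeSpanOfCardEqFinrank _ h hcard) τ⟩

theorem normal_basis_of_degree_p_general
    (p : ℕ) [Fact p.Prime]
    (K N : Type*) [Field K] [Field N]
    [Algebra ℚ_[p] K]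
    [Algebra K N] [IsGalois K N]
    -- `N/K` is (cyclic) of degree `p`
    (hdeg : Module.finrank K N = p)
    (vK : K → ℤ)
    (vN : N → ℤ) (hvN : IsNormDiscreteVal vN)
    -- `N/K` is fully ramified
    (hfull : ∀ x : K, x ≠ 0 → vN (algebraMap K N x) = (p : ℤ) * vK x)
    (πN : N) (hπN0 : πN ≠ 0) (hπN1 : vN πN = 1)
    -- `b` is the unique ramification break, and `p ∤ b`
    (b : ℤ)
    (hb : ∀ i : ℤ, ramSet K N vN πN (i + 1) ⊂ ramSet K N vN πN i ↔ i = b)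
    (hpb : ¬ (p : ℤ) ∣ b)
    (ρ : N) (hρ0 : ρ ≠ 0)
    (hρ : vN ρ ≡ b [ZMOD (p : ℤ)]) :
    IsNormalBasisGenerator K N ρ := by
  have hp : p.Prime := Fact.out
  let : Algebra ℚ_[p] N := ((algebraMap K N).comp (algebraMap ℚ_[p] K)).toAlgebra
  have : FiniteDimensional K N := Module.finite_of_finrank_pos (hdeg ▸ hp.pos)
  have hspan := span_range_pow_eq_top hvN hfull hdeg hπN0 hπN1
  have hbreak := fun τ : N ≃ₐ[K] N => val_sub_eq_of_ramSet_ssubset_iff hb (τ := τ)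
  have hb0 := break_pos hvN hfull hdeg hπN0 hπN1 hbreak hpb
  obtain ⟨σ, hσ⟩ := exists_apply_ne_of_ramSet_ssubset_iff hb
  have hiter := val_iterate_of_val_apply (f := fun y => σ y - y) hp hpb
    (fun _ hx hpx => val_apply_sub_self hvN hfull hspan hπN0 hπN1 hb0 hσ (hbreak σ hσ) hx hpx)
    hρ0 hρ
  have hli := linearIndependent_of_val_modEq_imp_eq hvN hfull
    (y := fun k : Fin p => (fun y => σ y - y)^[k] ρ) (fun k => (hiter k k.2).1)
    fun k k' h => Fin.eq_of_add_mul_modEq hp hpb (by rwa [(hiter k k.2).2, (hiter k' k'.2).2] at h)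
  refine isNormalBasisGenerator_of_top_le_span ?_
  rw [← hli.span_eq_top_of_card_eq_finrank' (by rw [Fintype.card_fin, hdeg])]
  exact Submodule.span_le.mpr <| Set.range_subset_iff.mpr fun k =>
    σ.iterate_sub_mem_span_range_apply ρ k

/-- **Degree-`p` case of Theorem 1.** Let `N/K` be a fully ramified cyclic extension of
degree `p` with unique ramification break `b`, where `p ∤ b`.  Then every `ρ ∈ N` with
`v_N(ρ) ≡ b (mod p)` generates a normal basis of `N` over `K`. -/
theorem normal_basis_of_degree_p
    (p : ℕ) [Fact p.Prime]
    (K N : Type*) [Field K] [Field N]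
    [Algebra ℚ_[p] K] [FiniteDimensional ℚ_[p] K]
    [Algebra K N] [IsGalois K N]
    -- `N/K` is (cyclic) of degree `p`
    (hdeg : Module.finrank K N = p)
    (vK : K → ℤ) (hvK : IsNormDiscreteVal vK)
    (vN : N → ℤ) (hvN : IsNormDiscreteVal vN)
    -- `N/K` is fully ramified
    (hfull : ∀ x : K, x ≠ 0 → vN (algebraMap K N x) = (p : ℤ) * vK x)
    (πN : N) (hπN0 : πN ≠ 0) (hπN1 : vN πN = 1)
    -- `b` is the unique ramification break, and `p ∤ b`
    (b : ℤ)
    (hb : ∀ i : ℤ, ramSet K N vN πN (i + 1) ⊂ ramSet K N vN πN i ↔ i = b)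
    (hpb : ¬ (p : ℤ) ∣ b)
    (ρ : N) (hρ0 : ρ ≠ 0)
    (hρ : vN ρ ≡ b [ZMOD (p : ℤ)]) :
    IsNormalBasisGenerator K N ρ :=
  normal_basis_of_degree_p_general p K N hdeg vK vN hvN hfull πN hπN0 hπN1 b hb hpb ρ hρ0 hρ
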